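/- Let T be a triangulated category with Bridgeland stability condition (Z, P), and for an interval I ⊆ ℝ let P(I) denote the extension-closure of the subcategories P(φ), φ ∈ I. Then F := P((0, ∞)) is a bounded t-structure on T, and its heart F ∩ F^⊥[1] equals P((0, 1]). -/

import Mathlib

/-!
STATEMENT 6: For a Bridgeland stability condition `(Z, P)` on a triangulated
category `T`, the extension closure `F = P((0, ∞))` is a bounded t-structure on
`T` whose heart `F ∩ F^⊥[1]` is `P((0, 1])`.
-/

open CategoryTheory CategoryTheory.Limits CategoryTheory.Pretriangulated

universe v u

variable (T : Type u) [Category.{v} T] [HasZeroObject T]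
  [Preadditive T] [HasShift T ℤ] [∀ n : ℤ, (shiftFunctor T n).Additive]
  [Pretriangulated T]

/-- A Bridgeland stability condition on a (pre)triangulated category `T`. -/
structure StabilityCondition where
  Z : T → ℂ
  P : ℝ → T → Prop
  Z_iso : ∀ {X Y : T}, (X ≅ Y) → Z X = Z Y
  Z_additive : ∀ (Tr : Triangle T), (Tr ∈ distTriang T) → Z Tr.obj₂ = Z Tr.obj₁ + Z Tr.obj₃
  P_iso : ∀ (φ : ℝ) {X Y : T}, (X ≅ Y) → P φ X → P φ Y
  P_zero : ∀ (φ : ℝ) (X : T), IsZero X → P φ X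
  phase : ∀ (φ : ℝ) (E : T), P φ E → ¬ IsZero E →
    ∃ m : ℝ, 0 < m ∧ Z E = (m : ℂ) * Complex.exp ((Real.pi * φ : ℝ) * Complex.I)
  shift : ∀ (φ : ℝ) (E : T), P (φ + 1) (E⟦(1 : ℤ)⟧) ↔ P φ E
  hom_vanish : ∀ {φ₁ φ₂ : ℝ} {E₁ E₂ : T}, φ₂ < φ₁ → P φ₁ E₁ → P φ₂ E₂ →
    ∀ f : E₁ ⟶ E₂, f = 0
  hn : ∀ E : T, ¬ IsZero E →
    ∃ (n : ℕ) (Eo : Fin (n + 1) → T) (A : Fin n → T) (φs : Fin n → ℝ),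
      IsZero (Eo 0) ∧ Nonempty (Eo (Fin.last n) ≅ E) ∧ StrictAnti φs ∧
      (∀ i : Fin n, P (φs i) (A i)) ∧
      ∀ i : Fin n, ∃ (f : Eo i.castSucc ⟶ Eo i.succ) (g : Eo i.succ ⟶ A i)
        (h : A i ⟶ (Eo i.castSucc)⟦(1 : ℤ)⟧), Triangle.mk f g h ∈ distTriang T

/-- The extension closure of a class `S` of objects: the smallest class
containing `S` and the zero objects, stable under isomorphism and under
extensions along distinguished triangles. -/
inductive ExtClosure (S : T → Prop) : T → Prop
  | base {E : T} : S E → ExtClosure S E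
  | zero {E : T} : IsZero E → ExtClosure S E
  | iso {X Y : T} : (X ≅ Y) → ExtClosure S X → ExtClosure S Y
  | ext {X Y Z : T} (f : X ⟶ Y) (g : Y ⟶ Z) (h : Z ⟶ X⟦(1 : ℤ)⟧) :
      (Triangle.mk f g h ∈ distTriang T) → ExtClosure S X → ExtClosure S Z →
      ExtClosure S Y

/-- `G` lies in the right orthogonal `F^⊥` of a class `F`. -/
def InPerp (F : T → Prop) (G : T) : Prop :=
  ∀ X : T, F X → ∀ u : X ⟶ G, u = 0

open scoped ZeroObject

section Aux

variable {T}

lemma ExtClosure.ext' {S : T → Prop} (Tr : Triangle T) (hTr : Tr ∈ distTriang T)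
    (h1 : ExtClosure T S Tr.obj₁) (h3 : ExtClosure T S Tr.obj₃) : ExtClosure T S Tr.obj₂ :=
  ExtClosure.ext Tr.mor₁ Tr.mor₂ Tr.mor₃ hTr h1 h3

lemma ExtClosure.mono {S S' : T → Prop} (h : ∀ X, S X → ExtClosure T S' X) :
    ∀ {E : T}, ExtClosure T S E → ExtClosure T S' E := by
  intro E hE
  induction hE with
  | base hb => exact h _ hb
  | zero hz => exact ExtClosure.zero hz
  | iso e _ ih => exact ExtClosure.iso e ih
  | ext f g m hdist hX hZ ihX ihZ => exact ExtClosure.ext f g m hdist ihX ihZ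

lemma ExtClosure.shiftK (k : ℤ) {S S' : T → Prop}
    (h : ∀ X, S X → ExtClosure T S' (X⟦k⟧)) :
    ∀ {E : T}, ExtClosure T S E → ExtClosure T S' (E⟦k⟧) := by
  intro E hE
  induction hE with
  | base hb => exact h _ hb
  | zero hz => exact ExtClosure.zero ((shiftFunctor T k).map_isZero hz)
  | iso e _ ih => exact ExtClosure.iso ((shiftFunctor T k).mapIso e) ih
  | ext f g m hdist hX hZ ihX ihZ =>
      exact ExtClosure.ext' _ (Pretriangulated.Triangle.shift_distinguished _ hdist k) ihX ihZ

lemma extClosure_hom_zero_left {S : T → Prop} {M : T}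
    (hS : ∀ X, S X → ∀ u : X ⟶ M, u = 0) :
    ∀ {Y : T}, ExtClosure T S Y → ∀ u : Y ⟶ M, u = 0 := by
  intro Y hY
  induction hY with
  | base hb => exact hS _ hb
  | zero hz => intro u; exact hz.eq_of_src u 0
  | iso e _ ih =>
      intro u
      have h1 := ih (e.hom ≫ u)
      calc u = e.inv ≫ (e.hom ≫ u) := by simp
        _ = 0 := by rw [h1, comp_zero]
  | ext f g m hdist hX hZ ihX ihZ =>
      intro u
      obtain ⟨v, hv⟩ := Pretriangulated.Triangle.yoneda_exact₂ _ hdist u (ihX (f ≫ u))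
      rw [hv, ihZ v]; exact comp_zero

lemma extClosure_hom_zero_right {S : T → Prop} {M : T}
    (hS : ∀ X, S X → ∀ u : M ⟶ X, u = 0) :
    ∀ {Y : T}, ExtClosure T S Y → ∀ u : M ⟶ Y, u = 0 := by
  intro Y hY
  induction hY with
  | base hb => exact hS _ hb
  | zero hz => intro u; exact hz.eq_of_tgt u 0
  | iso e _ ih =>
      intro u
      have h1 := ih (u ≫ e.inv)
      calc u = (u ≫ e.inv) ≫ e.hom := by simp
        _ = 0 := by rw [h1, zero_comp]
  | ext f g m hdist hX hZ ihX ihZ =>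
      intro u
      obtain ⟨v, hv⟩ := Pretriangulated.Triangle.coyoneda_exact₂ _ hdist u (ihZ (u ≫ g))
      rw [hv, ihX v]; exact zero_comp

lemma P_shift_one (σ : StabilityCondition T) (φ : ℝ) (E : T) (h : σ.P φ E) :
    σ.P (φ + 1) (E⟦(1 : ℤ)⟧) := (σ.shift φ E).2 h

lemma P_shift_negone (σ : StabilityCondition T) (φ : ℝ) (E : T) (h : σ.P φ E) :
    σ.P (φ - 1) (E⟦(-1 : ℤ)⟧) := by
  apply (σ.shift (φ - 1) (E⟦(-1 : ℤ)⟧)).1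
  have e : E⟦(-1 : ℤ)⟧⟦(1 : ℤ)⟧ ≅ E := (shiftEquiv T (1 : ℤ)).counitIso.app E
  have h2 : σ.P φ (E⟦(-1 : ℤ)⟧⟦(1 : ℤ)⟧) := σ.P_iso φ e.symm h
  rwa [sub_add_cancel]

lemma P_shift (σ : StabilityCondition T) (k : ℤ) (φ : ℝ) (E : T) (h : σ.P φ E) :
    σ.P (φ + k) (E⟦k⟧) := by
  induction k using Int.induction_on with
  | zero =>
      have e : E⟦(0 : ℤ)⟧ ≅ E := (shiftFunctorZero T ℤ).app E
      simpa using σ.P_iso φ e.symm h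
  | succ n ih =>
      have h2 := P_shift_one σ _ _ ih
      have e : E⟦(n : ℤ)⟧⟦(1 : ℤ)⟧ ≅ E⟦(n : ℤ) + 1⟧ := ((shiftFunctorAdd T (n : ℤ) 1).app E).symm
      have h3 := σ.P_iso _ e h2
      have : (φ + (n : ℤ)) + 1 = φ + (((n : ℤ) + 1 : ℤ) : ℝ) := by push_cast; ring
      rwa [this] at h3
  | pred n ih =>
      have h2 := P_shift_negone σ _ _ ih
      have e : E⟦(-n : ℤ)⟧⟦(-1 : ℤ)⟧ ≅ E⟦(-n : ℤ) - 1⟧ := by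
        refine ((shiftFunctorAdd' T (-n : ℤ) (-1) ((-n : ℤ) - 1) (by ring)).app E).symm
      have h3 := σ.P_iso _ e h2
      have : (φ + (-n : ℤ)) - 1 = φ + (((-n : ℤ) - 1 : ℤ) : ℝ) := by push_cast; ring
      rwa [this] at h3

lemma perp_of_neg (σ : StabilityCondition T) {G : T}
    (hG : ExtClosure T (fun X => ∃ φ : ℝ, φ ≤ 0 ∧ σ.P φ X) G) :
    InPerp T (ExtClosure T (fun E => ∃ φ : ℝ, 0 < φ ∧ σ.P φ E)) G := by
  intro X hX u
  refine extClosure_hom_zero_left ?_ hX u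
  intro X' hX' v
  obtain ⟨φ, hφ, hP⟩ := hX'
  refine extClosure_hom_zero_right ?_ hG v
  intro Y hY w
  obtain ⟨ψ, hψ, hPY⟩ := hY
  exact σ.hom_vanish (lt_of_le_of_lt hψ hφ) hP hPY w

end Aux
section Pre
variable {T}

lemma prefix_mem {n : ℕ} (Eo : Fin (n + 1) → T) (A : Fin n → T)
    (h0 : IsZero (Eo 0))
    (htri : ∀ i : Fin n, ∃ (f : Eo i.castSucc ⟶ Eo i.succ) (g : Eo i.succ ⟶ A i)
      (h : A i ⟶ (Eo i.castSucc)⟦(1 : ℤ)⟧), Triangle.mk f g h ∈ distTriang T) :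
    ∀ (j : ℕ) (hj : j ≤ n),
      ExtClosure T (fun X => ∃ i : Fin n, (i : ℕ) < j ∧ Nonempty (X ≅ A i))
        (Eo ⟨j, Nat.lt_succ_of_le hj⟩) := by
  intro j
  induction j with
  | zero =>
      intro hj
      exact ExtClosure.zero (by simpa using h0)
  | succ j ih =>
      intro hj
      have hj' : j < n := hj
      obtain ⟨f, g, h, hdist⟩ := htri ⟨j, hj'⟩
      have h1 : ExtClosure T (fun X => ∃ i : Fin n, (i : ℕ) < j + 1 ∧ Nonempty (X ≅ A i))
          (Eo ⟨j, Nat.lt_succ_of_le (le_of_lt hj')⟩) := by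
        refine ExtClosure.mono ?_ (ih (le_of_lt hj'))
        rintro X ⟨i, hi, hiso⟩
        exact ExtClosure.base ⟨i, Nat.lt_succ_of_lt hi, hiso⟩
      have h3 : ExtClosure T (fun X => ∃ i : Fin n, (i : ℕ) < j + 1 ∧ Nonempty (X ≅ A i))
          (A ⟨j, hj'⟩) :=
        ExtClosure.base ⟨⟨j, hj'⟩, Nat.lt_succ_of_le le_rfl, ⟨Iso.refl _⟩⟩
      exact ExtClosure.ext f g h hdist h1 h3

end Pre
theorem stmt_6 (σ : StabilityCondition T) :
    -- `F := P((0,∞))`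
    let F : T → Prop := ExtClosure T (fun E => ∃ φ : ℝ, 0 < φ ∧ σ.P φ E)
    -- (1) `F[1] ⊆ F`:
    ((∀ E : T, F E → F (E⟦(1 : ℤ)⟧))
    -- (2) every object sits in a triangle `F' → E → G → F'[1]` with `F' ∈ F`, `G ∈ F^⊥`:
    ∧ (∀ E : T, ∃ (F' G : T) (f : F' ⟶ E) (g : E ⟶ G) (h : G ⟶ F'⟦(1 : ℤ)⟧),
        F F' ∧ InPerp T F G ∧ Triangle.mk f g h ∈ distTriang T)
    -- (3) the t-structure is bounded:
    ∧ (∀ E : T, ∃ m n : ℤ, F (E⟦(-m : ℤ)⟧) ∧ InPerp T F (E⟦(-n : ℤ)⟧)))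
    -- (4) the heart `F ∩ F^⊥[1]` equals `P((0,1])`:
    ∧ (∀ E : T,
        (F E ∧ InPerp T F (E⟦(-1 : ℤ)⟧)) ↔
          ExtClosure T (fun X => ∃ φ : ℝ, 0 < φ ∧ φ ≤ 1 ∧ σ.P φ X) E) := by
  intro F
  classical
  have hvan : ∀ (M : T) (ψ : ℝ), ψ ≤ 0 → σ.P ψ M → ∀ X : T, F X → ∀ u : X ⟶ M, u = 0 := by
    intro M ψ hψ hM X hX
    refine extClosure_hom_zero_left ?_ hX
    rintro X' ⟨φ, hφ, hP⟩ u
    exact σ.hom_vanish (lt_of_le_of_lt hψ hφ) hP hM u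
  refine ⟨⟨?_, ?_, ?_⟩, ?_⟩
  · -- (1)
    intro E hE
    refine ExtClosure.shiftK 1 ?_ hE
    rintro X ⟨φ, hφ, hP⟩
    exact ExtClosure.base ⟨φ + 1, by linarith, P_shift_one σ φ X hP⟩
  · -- (2)
    intro E
    by_cases hE : IsZero E
    · refine ⟨E, 0, 𝟙 E, 0, 0, ExtClosure.zero hE, ?_, contractible_distinguished E⟩
      intro X _ u
      exact (isZero_zero T).eq_of_tgt u 0
    · obtain ⟨n, Eo, A, φs, h0, ⟨e⟩, hanti, hPA, htri⟩ := σ.hn E hE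
      obtain ⟨k, hk1, hk2, hk3⟩ :
          ∃ k : ℕ, k ≤ n ∧ (∀ i : Fin n, (i : ℕ) < k → 0 < φs i) ∧
            (∀ i : Fin n, k ≤ (i : ℕ) → φs i ≤ 0) := by
        by_cases hall : ∀ i : Fin n, 0 < φs i
        · exact ⟨n, le_rfl, fun i _ => hall i, fun i hi => absurd i.isLt (by omega)⟩
        · push_neg at hall
          obtain ⟨i0, hi0⟩ := hall
          have hex : ∃ j : ℕ, ∃ hj : j < n, φs ⟨j, hj⟩ ≤ 0 := ⟨i0, i0.isLt, by simpa using hi0⟩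
          obtain ⟨hkn, hkle⟩ := Nat.find_spec hex
          refine ⟨Nat.find hex, le_of_lt hkn, ?_, ?_⟩
          · intro i hi
            have hmin := Nat.find_min hex hi
            push_neg at hmin
            have := hmin i.isLt
            simpa using this
          · intro i hi
            have hle : φs i ≤ φs ⟨Nat.find hex, hkn⟩ := hanti.antitone (Fin.le_def.2 hi)
            linarith
      have hAvan : ∀ i : Fin n, k ≤ (i : ℕ) → ∀ X : T, F X → ∀ u : X ⟶ A i, u = 0 :=
        fun i hi => hvan (A i) (φs i) (hk3 i hi) (hPA i)
      have main : ∀ (j : ℕ) (hkj : k ≤ j), ∀ (hj : j ≤ n),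
          ∃ c : Eo ⟨k, Nat.lt_succ_of_le hk1⟩ ⟶ Eo ⟨j, Nat.lt_succ_of_le hj⟩,
            (∀ X : T, F X → ∀ v : X ⟶ Eo ⟨j, Nat.lt_succ_of_le hj⟩,
               ∃ w : X ⟶ Eo ⟨k, Nat.lt_succ_of_le hk1⟩, w ≫ c = v) ∧
            (∀ X : T, F X → ∀ v : X ⟶ (Eo ⟨k, Nat.lt_succ_of_le hk1⟩)⟦(1 : ℤ)⟧,
               v ≫ c⟦(1 : ℤ)⟧' = 0 → v = 0) := by
        intro j hkj
        induction j, hkj using Nat.le_induction with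
        | base =>
            intro hj
            refine ⟨𝟙 _, ?_, ?_⟩
            · intro X _ v; exact ⟨v, by simp⟩
            · intro X _ v hv; simpa using hv
        | succ j hkj ih =>
            intro hj
            have hjn : j < n := hj
            obtain ⟨c, hS, hI⟩ := ih (le_of_lt hjn)
            obtain ⟨f, g, h, hdist⟩ := htri ⟨j, hjn⟩
            refine ⟨c ≫ f, ?_, ?_⟩
            · intro X hX v
              have hvg : v ≫ g = 0 := hAvan ⟨j, hjn⟩ hkj X hX (v ≫ g)
              obtain ⟨w', hw'⟩ := Pretriangulated.Triangle.coyoneda_exact₂ _ hdist v hvg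
              obtain ⟨w, hw⟩ := hS X hX w'
              have hw'2 : v = w' ≫ f := hw'
              exact ⟨w, by rw [← Category.assoc, hw]; exact hw'2.symm⟩
            · intro X hX v hv
              rw [Functor.map_comp, ← Category.assoc] at hv
              obtain ⟨u, hu⟩ := Pretriangulated.Triangle.coyoneda_exact₁ _ hdist
                (v ≫ c⟦(1 : ℤ)⟧') hv
              have hu0 : u = 0 := hAvan ⟨j, hjn⟩ hkj X hX u
              refine hI X hX v ?_
              exact hu.trans (by rw [hu0]; exact zero_comp)
      obtain ⟨c, hS, hI⟩ := main n hk1 le_rfl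
      have hF' : F (Eo ⟨k, Nat.lt_succ_of_le hk1⟩) := by
        refine ExtClosure.mono ?_ (prefix_mem Eo A h0 htri k hk1)
        rintro X ⟨i, hik, ⟨e'⟩⟩
        exact ExtClosure.base ⟨φs i, hk2 i hik, σ.P_iso _ e'.symm (hPA i)⟩
      obtain ⟨G, g, h, hdist⟩ := Pretriangulated.distinguished_cocone_triangle (c ≫ e.hom)
      refine ⟨_, G, c ≫ e.hom, g, h, hF', ?_, hdist⟩
      intro X hX u
      have h31 : h ≫ (c ≫ e.hom)⟦(1 : ℤ)⟧' = 0 := comp_distTriang_mor_zero₃₁ _ hdist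
      have h1 : (u ≫ h) ≫ c⟦(1 : ℤ)⟧' = 0 := by
        rw [← cancel_mono (e.hom⟦(1 : ℤ)⟧')]
        rw [zero_comp, Category.assoc, Category.assoc, ← Functor.map_comp, ← Category.assoc,
          Category.assoc, h31, comp_zero]
      have h2 : u ≫ h = 0 := hI X hX (u ≫ h) h1
      obtain ⟨v, hv0⟩ := Pretriangulated.Triangle.coyoneda_exact₃ _ hdist u h2
      have hv : u = v ≫ g := hv0
      obtain ⟨w, hw⟩ := hS X hX (v ≫ e.inv)
      have h12 : (c ≫ e.hom) ≫ g = 0 := comp_distTriang_mor_zero₁₂ _ hdist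
      have hv' : v = w ≫ (c ≫ e.hom) := by
        have key : ∀ v' : X ⟶ E, v' = (v' ≫ e.inv) ≫ e.hom := fun v' => by simp
        rw [← Category.assoc, hw]; exact key v
      have key2 : ∀ w' : X ⟶ _, (w' ≫ (c ≫ e.hom)) ≫ g = 0 := fun w' => by
        rw [Category.assoc, h12, comp_zero]
      rw [hv, hv']; exact key2 w
  · -- (3)
    intro E
    by_cases hE : IsZero E
    · refine ⟨0, 0, ExtClosure.zero ((shiftFunctor T (-(0:ℤ))).map_isZero hE), ?_⟩
      intro X _ u
      exact ((shiftFunctor T (-(0:ℤ))).map_isZero hE).eq_of_tgt u 0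
    · obtain ⟨n, Eo, A, φs, h0, ⟨e⟩, hanti, hPA, htri⟩ := σ.hn E hE
      have hn0 : 0 < n := by
        rcases Nat.eq_zero_or_pos n with hh | hh
        · subst hh
          exact absurd (IsZero.of_iso h0 e.symm) hE
        · exact hh
      have hES0 : ExtClosure T (fun X => ∃ i : Fin n, Nonempty (X ≅ A i)) E := by
        refine ExtClosure.iso e ?_
        refine ExtClosure.mono ?_ (prefix_mem Eo A h0 htri n le_rfl)
        rintro X ⟨i, _, hiso⟩
        exact ExtClosure.base ⟨i, hiso⟩
      have hlow : ∀ i : Fin n, φs ⟨n - 1, by omega⟩ ≤ φs i :=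
        fun i => hanti.antitone (Fin.le_def.2 (show (i : ℕ) ≤ n - 1 by have := i.isLt; omega))
      have hhigh : ∀ i : Fin n, φs i ≤ φs ⟨0, hn0⟩ :=
        fun i => hanti.antitone (Fin.le_def.2 (Nat.zero_le _))
      obtain ⟨m, hm⟩ := exists_int_gt (-φs ⟨n - 1, by omega⟩)
      obtain ⟨N, hN⟩ := exists_int_gt (φs ⟨0, hn0⟩)
      refine ⟨-m, N, ?_, ?_⟩
      · simp only [neg_neg]
        refine ExtClosure.shiftK m ?_ hES0
        rintro X ⟨i, ⟨e'⟩⟩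
        refine ExtClosure.base ⟨φs i + m, ?_,
          σ.P_iso _ ((shiftFunctor T m).mapIso e').symm (P_shift σ m _ _ (hPA i))⟩
        have := hlow i
        linarith
      · refine perp_of_neg σ ?_
        refine ExtClosure.shiftK (-N) ?_ hES0
        rintro X ⟨i, ⟨e'⟩⟩
        refine ExtClosure.base ⟨φs i + (-N : ℤ), ?_,
          σ.P_iso _ ((shiftFunctor T (-N)).mapIso e').symm (P_shift σ (-N) _ _ (hPA i))⟩
        have := hhigh i
        push_cast
        linarith
  · -- (4)
    intro E
    constructor
    · rintro ⟨hF, hperp⟩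
      by_cases hE : IsZero E
      · exact ExtClosure.zero hE
      obtain ⟨n, Eo, A, φs, h0, ⟨e⟩, hanti, hPA, htri⟩ := σ.hn E hE
      have claimA : ∀ i : Fin n, ¬ IsZero (A i) → 0 < φs i := by
        by_contra hcon
        push_neg at hcon
        obtain ⟨i0, hi0z, hi0φ⟩ := hcon
        set Sb : Finset (Fin n) :=
          Finset.univ.filter (fun i => ¬ IsZero (A i) ∧ φs i ≤ 0) with hSb
        have hne : Sb.Nonempty := ⟨i0, by simp [hSb, Finset.mem_filter, hi0z, hi0φ]⟩
        set j := Sb.max' hne with hjdef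
        obtain ⟨hjA, hjφ⟩ : ¬ IsZero (A j) ∧ φs j ≤ 0 := by
          simpa [hSb, Finset.mem_filter] using Sb.max'_mem hne
        have hzero_above : ∀ i : Fin n, j < i → IsZero (A i) := by
          intro i hji
          by_contra hiz
          have hnot : i ∉ Sb := fun hmem => absurd (Sb.le_max' i hmem) (not_le.2 hji)
          have hni : ¬(¬ IsZero (A i) ∧ φs i ≤ 0) := by
            simpa [hSb, Finset.mem_filter] using hnot
          have hlt : φs i < φs j := hanti hji
          exact hni ⟨hiz, by linarith⟩
        have hjn : (j : ℕ) < n := j.isLt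
        have chain : ∀ m : ℕ, (j : ℕ) + 1 ≤ m → ∀ hm : m ≤ n,
            Nonempty ((Eo j.succ) ≅ Eo ⟨m, Nat.lt_succ_of_le hm⟩) := by
          intro m hm
          induction m, hm using Nat.le_induction with
          | base => exact fun _ => ⟨Iso.refl _⟩
          | succ m hm ih =>
              intro hm1
              have hmn : m < n := hm1
              obtain ⟨em⟩ := ih (le_of_lt hmn)
              obtain ⟨f, g, h, hdist⟩ := htri ⟨m, hmn⟩
              have hz : IsZero (A ⟨m, hmn⟩) := hzero_above _ (Fin.lt_def.2 (show (j:ℕ) < m by omega))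
              have : IsIso f := (Pretriangulated.Triangle.isZero₃_iff_isIso₁ _ hdist).1 hz
              exact ⟨em ≪≫ asIso f⟩
        obtain ⟨ec⟩ := chain n (by omega) le_rfl
        have e2 : Eo j.succ ≅ E := ec ≪≫ e
        obtain ⟨f, g, h, hdist⟩ := htri j
        have hFj1 : F (Eo j.succ) := ExtClosure.iso e2.symm hF
        have hg : g = 0 := hvan (A j) (φs j) hjφ (hPA j) _ hFj1 g
        obtain ⟨v, hv⟩ := Pretriangulated.Triangle.yoneda_exact₂ _
          (Pretriangulated.rot_of_distTriang _ hdist) (𝟙 (A j))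
          (show g ≫ 𝟙 (A j) = 0 by rw [hg, zero_comp])
        have hv2 : 𝟙 (A j) = h ≫ v := hv
        have hv0 : v = 0 := by
          have hpre := prefix_mem Eo A h0 htri (j : ℕ) (le_of_lt hjn)
          have hsh : ExtClosure T
              (fun X => ∃ i : Fin n, (i : ℕ) < (j : ℕ) ∧ Nonempty (X ≅ (A i)⟦(1 : ℤ)⟧))
              ((Eo ⟨(j : ℕ), Nat.lt_succ_of_le (le_of_lt hjn)⟩)⟦(1 : ℤ)⟧) := by
            refine ExtClosure.shiftK 1 ?_ hpre
            rintro X ⟨i, hij, ⟨e'⟩⟩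
            exact ExtClosure.base ⟨i, hij, ⟨(shiftFunctor T (1 : ℤ)).mapIso e'⟩⟩
          refine extClosure_hom_zero_left ?_ hsh v
          rintro X ⟨i, hij, ⟨e'⟩⟩ u
          have hPi : σ.P (φs i + 1) ((A i)⟦(1 : ℤ)⟧) := P_shift_one σ _ _ (hPA i)
          have hlt2 : φs j < φs i + 1 := by
            have : φs j < φs i := hanti (Fin.lt_def.2 hij)
            linarith
          have hz2 := σ.hom_vanish hlt2 hPi (hPA j) (e'.inv ≫ u)
          calc u = e'.hom ≫ (e'.inv ≫ u) := by simp
            _ = 0 := by rw [hz2, comp_zero]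
        exact hjA ((Limits.IsZero.iff_id_eq_zero _).2 (by rw [hv2, hv0]; exact comp_zero))
      have claimB : ∀ i : Fin n, ¬ IsZero (A i) → φs i ≤ 1 := by
        by_contra hcon
        push_neg at hcon
        obtain ⟨i0, hi0z, hi0φ⟩ := hcon
        set Sb : Finset (Fin n) :=
          Finset.univ.filter (fun i => ¬ IsZero (A i) ∧ 1 < φs i) with hSb
        have hne : Sb.Nonempty := ⟨i0, by simp [hSb, Finset.mem_filter, hi0z, hi0φ]⟩
        set j := Sb.min' hne with hjdef
        obtain ⟨hjA, hjφ⟩ : ¬ IsZero (A j) ∧ 1 < φs j := by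
          simpa [hSb, Finset.mem_filter] using Sb.min'_mem hne
        have hzero_below : ∀ i : Fin n, i < j → IsZero (A i) := by
          intro i hij
          by_contra hiz
          have hnot : i ∉ Sb := fun hmem => absurd (Sb.min'_le i hmem) (not_le.2 hij)
          have hni : ¬(¬ IsZero (A i) ∧ 1 < φs i) := by
            simpa [hSb, Finset.mem_filter] using hnot
          have hlt : φs j < φs i := hanti hij
          exact hni ⟨hiz, by linarith⟩
        have hjn : (j : ℕ) < n := j.isLt
        have zchain : ∀ m : ℕ, ∀ hm : m ≤ (j : ℕ),
            IsZero (Eo ⟨m, Nat.lt_succ_of_lt (lt_of_le_of_lt hm hjn)⟩) := by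
          intro m
          induction m with
          | zero => intro hm; exact (by simpa using h0)
          | succ m ih =>
              intro hm
              have hmn : m < n := by omega
              obtain ⟨f, g, h, hdist⟩ := htri ⟨m, hmn⟩
              exact Pretriangulated.Triangle.isZero₂_of_isZero₁₃ _ hdist (ih (by omega))
                (hzero_below ⟨m, hmn⟩ (Fin.lt_def.2 (show m < (j:ℕ) by omega)))
        obtain ⟨f, g, h, hdist⟩ := htri j
        have hiso : IsIso g :=
          (Pretriangulated.Triangle.isZero₁_iff_isIso₂ _ hdist).1 (zchain (j : ℕ) le_rfl)
        have eA : Eo j.succ ≅ A j := asIso g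
        have inj : ∀ m : ℕ, (j : ℕ) + 1 ≤ m → ∀ hm : m ≤ n,
            ∃ c : Eo j.succ ⟶ Eo ⟨m, Nat.lt_succ_of_le hm⟩,
              ∀ v : Eo j.succ ⟶ Eo j.succ, v ≫ c = 0 → v = 0 := by
          intro m hm
          induction m, hm using Nat.le_induction with
          | base => exact fun _ => ⟨𝟙 _, fun v hv => by simpa using hv⟩
          | succ m hm ih =>
              intro hm1
              have hmn : m < n := hm1
              obtain ⟨c, hc⟩ := ih (le_of_lt hmn)
              obtain ⟨f', g', h', hdist'⟩ := htri ⟨m, hmn⟩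
              refine ⟨c ≫ f', ?_⟩
              intro v hv
              rw [← Category.assoc] at hv
              obtain ⟨u, hu⟩ := Pretriangulated.Triangle.coyoneda_exact₂ _
                (Pretriangulated.inv_rot_of_distTriang _ hdist') (v ≫ c) hv
              have hu0 : u = 0 := by
                by_cases hz : IsZero (A ⟨m, hmn⟩)
                · exact ((shiftFunctor T (-1 : ℤ)).map_isZero hz).eq_of_tgt u 0
                · have hPm : σ.P (φs ⟨m, hmn⟩ - 1) ((A ⟨m, hmn⟩)⟦(-1 : ℤ)⟧) :=
                    P_shift_negone σ _ _ (hPA _)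
                  have hlt : φs ⟨m, hmn⟩ - 1 < φs j := by
                    have : φs ⟨m, hmn⟩ < φs j := hanti (Fin.lt_def.2 (show (j:ℕ) < m by omega))
                    linarith
                  have hAj : σ.P (φs j) (Eo j.succ) := σ.P_iso _ eA.symm (hPA j)
                  exact σ.hom_vanish hlt hAj hPm u
              refine hc v ?_
              exact hu.trans (by rw [hu0]; exact zero_comp)
        obtain ⟨c, hc⟩ := inj n (by omega) le_rfl
        have hXF : F ((Eo j.succ)⟦(-1 : ℤ)⟧) :=
          ExtClosure.base ⟨φs j - 1, by linarith,
            P_shift_negone σ _ _ (σ.P_iso _ eA.symm (hPA j))⟩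
        have h0' := hperp _ hXF ((shiftFunctor T (-1 : ℤ)).map (c ≫ e.hom))
        have hcE : c ≫ e.hom = 0 := by
          refine (shiftFunctor T (-1 : ℤ)).map_injective ?_
          rw [h0', Functor.map_zero]
        have hc0 : c = 0 := (cancel_mono e.hom).1 (by rw [hcE, zero_comp])
        have hid : 𝟙 (Eo j.succ) = 0 := hc (𝟙 _) (by rw [Category.id_comp, hc0])
        exact hjA (((Limits.IsZero.iff_id_eq_zero _).2 hid).of_iso eA.symm)
      refine ExtClosure.iso e ?_
      refine ExtClosure.mono ?_ (prefix_mem Eo A h0 htri n le_rfl)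
      rintro X ⟨i, _, ⟨e'⟩⟩
      by_cases hz : IsZero (A i)
      · exact ExtClosure.zero (hz.of_iso e')
      · exact ExtClosure.base ⟨φs i, claimA i hz, claimB i hz, σ.P_iso _ e'.symm (hPA i)⟩
    · intro hE
      constructor
      · refine ExtClosure.mono ?_ hE
        rintro X ⟨φ, h1, h2, hP⟩
        exact ExtClosure.base ⟨φ, h1, hP⟩
      · refine perp_of_neg σ ?_
        refine ExtClosure.shiftK (-1) ?_ hE
        rintro X ⟨φ, h1, h2, hP⟩
        exact ExtClosure.base ⟨φ - 1, by linarith, P_shift_negone σ _ _ hP⟩
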